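/- (Completeness of the partial m.p. scheme.) Let J ⊆ {1,…,n}, and let h be a multivalued refinement of f on X = ∏_j {0,…,m_j} where m_j > 1 iff j ∈ J. If there is an asynchronous trajectory from x to y in the dynamics of h, then for any J-m.p. state x̂ compatible with x there exists a trajectory in the partial J-m.p. dynamics of f from x̂ to some state ŷ compatible with y. -/

import Mathlib

/-- Activity levels of the most permissive scheme: 0, 1, increasing, decreasing. -/
inductive MPLevel : Type
  | zero | one | inc | dec
deriving DecidableEq

/-- The set γ(x̂) of Boolean states compatible with an m.p. state x̂. -/
def mpGamma {n : ℕ} (x : Fin n → MPLevel) : Set (Fin n → Bool) :=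
  {x' | ∀ j, (x j = MPLevel.zero → x' j = false) ∧ (x j = MPLevel.one → x' j = true)}

/-- The set α(x) of Boolean states compatible with a multivalued state x. -/
def mvAlpha {n : ℕ} (m x : Fin n → ℕ) : Set (Fin n → Bool) :=
  {x' | ∀ j, (x j = 0 → x' j = false) ∧ (x j = m j → x' j = true)}

/-- Coordinatewise embedding of Boolean states into m.p. states. -/
def embBM {n : ℕ} (x : Fin n → Bool) : Fin n → MPLevel :=
  fun j => if x j then MPLevel.one else MPLevel.zero

/-- Embedding of a Boolean state into X = ∏ {0,…,m_j}, sending 1 to m_j. -/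
def embX {n : ℕ} (m : Fin n → ℕ) (x : Fin n → Bool) : Fin n → ℕ :=
  fun j => if x j then m j else 0

/-- Transition of the most permissive dynamics of f at coordinate j0. -/
def mpTransAt {n : ℕ} (f : (Fin n → Bool) → Fin n → Bool) (j0 : Fin n)
    (x y : Fin n → MPLevel) : Prop :=
  (∀ j, j ≠ j0 → y j = x j) ∧
    (((x j0 = MPLevel.zero ∨ x j0 = MPLevel.dec) ∧ (∃ x' ∈ mpGamma x, f x' j0 = true) ∧ y j0 = MPLevel.inc) ∨
     ((x j0 = MPLevel.one ∨ x j0 = MPLevel.inc) ∧ (∃ x' ∈ mpGamma x, f x' j0 = false) ∧ y j0 = MPLevel.dec) ∨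
     (x j0 = MPLevel.inc ∧ y j0 = MPLevel.one) ∨
     (x j0 = MPLevel.dec ∧ y j0 = MPLevel.zero))

/-- Transition of the most permissive dynamics of f. -/
def mpTrans {n : ℕ} (f : (Fin n → Bool) → Fin n → Bool) (x y : Fin n → MPLevel) : Prop :=
  ∃ j0, mpTransAt f j0 x y

/-- Transition of the partial J-most-permissive dynamics of f at coordinate j0. -/
def pmpTransAt {n : ℕ} (J : Set (Fin n)) (f : (Fin n → Bool) → Fin n → Bool) (j0 : Fin n)
    (x y : Fin n → MPLevel) : Prop :=
  (∀ j, j ≠ j0 → y j = x j) ∧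
    (((x j0 = MPLevel.zero ∨ x j0 = MPLevel.dec) ∧ (∃ x' ∈ mpGamma x, f x' j0 = true) ∧ y j0 = MPLevel.inc) ∨
     ((x j0 = MPLevel.one ∨ x j0 = MPLevel.inc) ∧ (∃ x' ∈ mpGamma x, f x' j0 = false) ∧ y j0 = MPLevel.dec) ∨
     (x j0 = MPLevel.inc ∧ y j0 = MPLevel.one) ∨
     (x j0 = MPLevel.dec ∧ y j0 = MPLevel.zero) ∨
     (j0 ∉ J ∧ x j0 = MPLevel.zero ∧ (∃ x' ∈ mpGamma x, f x' j0 = true) ∧ y j0 = MPLevel.one) ∨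
     (j0 ∉ J ∧ x j0 = MPLevel.one ∧ (∃ x' ∈ mpGamma x, f x' j0 = false) ∧ y j0 = MPLevel.zero))

/-- Transition of the partial J-most-permissive dynamics of f. -/
def pmpTrans {n : ℕ} (J : Set (Fin n)) (f : (Fin n → Bool) → Fin n → Bool)
    (x y : Fin n → MPLevel) : Prop :=
  ∃ j0, pmpTransAt J f j0 x y

/-- A state of X_{J m.p.}: coordinates outside J are Boolean. -/
def inXJ {n : ℕ} (J : Set (Fin n)) (x : Fin n → MPLevel) : Prop :=
  ∀ j, j ∉ J → (x j = MPLevel.zero ∨ x j = MPLevel.one)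

/-- Asynchronous transition of a Boolean model f. -/
def asyncTransB {n : ℕ} (f : (Fin n → Bool) → Fin n → Bool) (x y : Fin n → Bool) : Prop :=
  ∃ j0, f x j0 ≠ x j0 ∧ y j0 = f x j0 ∧ ∀ j, j ≠ j0 → y j = x j

/-- Asynchronous transition of a multivalued model h (one coordinate moves by 1 toward its target). -/
def asyncTrans {n : ℕ} (h : (Fin n → ℕ) → Fin n → ℕ) (x y : Fin n → ℕ) : Prop :=
  ∃ j0, h x j0 ≠ x j0 ∧ (∀ j, j ≠ j0 → y j = x j) ∧
    ((x j0 < h x j0 ∧ y j0 = x j0 + 1) ∨ (h x j0 < x j0 ∧ y j0 = x j0 - 1))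

/-- An m.p. state x̂ is compatible with a multivalued state x. -/
def mpCompat {n : ℕ} (m x : Fin n → ℕ) (xh : Fin n → MPLevel) : Prop :=
  ∀ j, (x j = 0 → xh j = MPLevel.zero) ∧ (x j = m j → xh j = MPLevel.one) ∧
    (0 < x j → x j < m j → (xh j = MPLevel.inc ∨ xh j = MPLevel.dec))

/-- h is a multivalued model on X = ∏ {0,…,m_j}: maps X to X, moving each coordinate by at most 1. -/
def isMVModel {n : ℕ} (m : Fin n → ℕ) (h : (Fin n → ℕ) → Fin n → ℕ) : Prop :=
  ∀ x, (∀ j, x j ≤ m j) → ∀ j, h x j ≤ m j ∧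
    (h x j = x j ∨ h x j = x j + 1 ∨ h x j + 1 = x j)

/-- h is a multivalued refinement of the Boolean model f. -/
def isRefinement {n : ℕ} (m : Fin n → ℕ) (f : (Fin n → Bool) → Fin n → Bool)
    (h : (Fin n → ℕ) → Fin n → ℕ) : Prop :=
  ∀ x, (∀ j, x j ≤ m j) → ∀ j,
    (h x j < x j → ∃ x' ∈ mvAlpha m x, f x' j = false ∧ x' j = true) ∧
    (x j < h x j → ∃ x' ∈ mvAlpha m x, f x' j = true ∧ x' j = false)

/-- A literal in a DNF: a regulator index, a polarity, and a threshold (used in the multivalued reading). -/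
structure Lit (n : ℕ) where
  idx : Fin n
  pos : Bool
  thr : ℕ

/-- Boolean evaluation of a literal (threshold ignored). -/
def evalLitB {n : ℕ} (x : Fin n → Bool) (l : Lit n) : Bool :=
  if l.pos then x l.idx else !(x l.idx)

/-- Multivalued evaluation of a literal: x_idx ≥ thr+1 for a positive literal, x_idx < thr+1 otherwise. -/
def evalLitM {n : ℕ} (x : Fin n → ℕ) (l : Lit n) : Bool :=
  if l.pos then decide (l.thr + 1 ≤ x l.idx) else decide (x l.idx < l.thr + 1)

/-- Boolean evaluation of a DNF (list of conjunctive clauses). -/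
def evalDNFB {n : ℕ} (x : Fin n → Bool) (φ : List (List (Lit n))) : Bool :=
  φ.any fun c => c.all (evalLitB x)

/-- Multivalued evaluation of a DNF via the thresholds. -/
def evalDNFM {n : ℕ} (x : Fin n → ℕ) (φ : List (List (Lit n))) : Bool :=
  φ.any fun c => c.all (evalLitM x)

/-- Refinement built from the DNF threshold parameterisation:
h_j(x) = max(0, min(m_j, x_j + H_j(x))) with H_j(x) = +1 iff the multivalued DNF of f_j is true. -/
def hDNF {n : ℕ} (m : Fin n → ℕ) (φ : Fin n → List (List (Lit n)))
    (x : Fin n → ℕ) : Fin n → ℕ :=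
  fun j => if evalDNFM x (φ j) then min (m j) (x j + 1) else x j - 1

/-! One asynchronous step of `h` moves a single coordinate `j₀` by one unit, and the refinement
property supplies a Boolean state of `α(x) ⊆ γ(x̂)` on which `f` points in the same direction.
That witness licenses the m.p. move of `x̂ j₀` towards `inc` (or `dec`), after which `inc → one`
(or `dec → zero`) needs no witness. The only step that cannot pass through `inc`/`dec` is a jump
`0 ↔ 1` of a coordinate with `m j₀ = 1`, which lies outside `J` and is therefore a direct partial
m.p. transition. -/

set_option autoImplicit false

open Function Relation

section Compat

variable {n : ℕ} {m x y : Fin n → ℕ} {xh : Fin n → MPLevel} {j j₀ : Fin n}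

lemma mpCompat.eq_zero (hc : mpCompat m x xh) (hx : x j ≤ m j) (h0 : xh j = .zero) :
    x j = 0 := by
  by_contra hpos
  rcases hx.lt_or_eq with hlt | heq
  · rcases (hc j).2.2 (Nat.pos_of_ne_zero hpos) hlt with h | h <;> simp [h] at h0
  · simp [(hc j).2.1 heq] at h0

lemma mpCompat.eq_of_eq_one (hc : mpCompat m x xh) (hx : x j ≤ m j) (h1 : xh j = .one) :
    x j = m j := by
  by_contra hne
  by_cases h0 : x j = 0
  · simp [(hc j).1 h0] at h1
  · rcases (hc j).2.2 (Nat.pos_of_ne_zero h0) (lt_of_le_of_ne hx hne) with h | h <;>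
      simp [h] at h1

lemma mvAlpha_subset_mpGamma (hc : mpCompat m x xh) (hx : ∀ j, x j ≤ m j) :
    mvAlpha m x ⊆ mpGamma xh :=
  fun _ hw j => ⟨fun h0 => (hw j).1 (hc.eq_zero (hx j) h0),
    fun h1 => (hw j).2 (hc.eq_of_eq_one (hx j) h1)⟩

lemma mpCompat_update (hc : mpCompat m x xh) (hfix : ∀ j, j ≠ j₀ → y j = x j) {L : MPLevel}
    (hL : (y j₀ = 0 → L = .zero) ∧ (y j₀ = m j₀ → L = .one) ∧
      (0 < y j₀ → y j₀ < m j₀ → L = .inc ∨ L = .dec)) :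
    mpCompat m y (update xh j₀ L) := by
  intro j
  rcases eq_or_ne j j₀ with rfl | hj
  · simpa only [update_self] using hL
  · simpa only [update_of_ne hj, hfix j hj] using hc j

lemma mpCompat_update_zero (hc : mpCompat m x xh) (hfix : ∀ j, j ≠ j₀ → y j = x j)
    (hy : y j₀ = 0) (hm : m j₀ ≠ 0) : mpCompat m y (update xh j₀ .zero) :=
  mpCompat_update hc hfix ⟨fun _ => rfl, fun h => absurd (h ▸ hy) hm, fun h => absurd hy h.ne'⟩

lemma mpCompat_update_one (hc : mpCompat m x xh) (hfix : ∀ j, j ≠ j₀ → y j = x j)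
    (hy : y j₀ = m j₀) (hy0 : y j₀ ≠ 0) : mpCompat m y (update xh j₀ .one) :=
  mpCompat_update hc hfix ⟨fun h => absurd h hy0, fun _ => rfl, fun _ h => absurd hy h.ne⟩

lemma mpCompat_update_of_lt (hc : mpCompat m x xh) (hfix : ∀ j, j ≠ j₀ → y j = x j)
    (h0 : 0 < y j₀) (hm : y j₀ < m j₀) {L : MPLevel} (hL : L = .inc ∨ L = .dec) :
    mpCompat m y (update xh j₀ L) :=
  mpCompat_update hc hfix ⟨fun h => absurd h h0.ne', fun h => absurd h hm.ne, fun _ _ => hL⟩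

end Compat

section Moves

variable {n : ℕ} {J : Set (Fin n)} {f : (Fin n → Bool) → Fin n → Bool} {xh : Fin n → MPLevel}
  {j₀ : Fin n}

lemma pmpTrans_update_inc (hL : xh j₀ = .zero ∨ xh j₀ = .dec)
    (hw : ∃ w ∈ mpGamma xh, f w j₀ = true) : pmpTrans J f xh (update xh j₀ .inc) :=
  ⟨j₀, fun _ hj => update_of_ne hj _ _, .inl ⟨hL, hw, update_self _ _ _⟩⟩

lemma pmpTrans_update_dec (hL : xh j₀ = .one ∨ xh j₀ = .inc)
    (hw : ∃ w ∈ mpGamma xh, f w j₀ = false) : pmpTrans J f xh (update xh j₀ .dec) :=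
  ⟨j₀, fun _ hj => update_of_ne hj _ _, .inr <| .inl ⟨hL, hw, update_self _ _ _⟩⟩

lemma pmpTrans_update_one_of_inc (hL : xh j₀ = .inc) : pmpTrans J f xh (update xh j₀ .one) :=
  ⟨j₀, fun _ hj => update_of_ne hj _ _, .inr <| .inr <| .inl ⟨hL, update_self _ _ _⟩⟩

lemma pmpTrans_update_zero_of_dec (hL : xh j₀ = .dec) : pmpTrans J f xh (update xh j₀ .zero) :=
  ⟨j₀, fun _ hj => update_of_ne hj _ _, .inr <| .inr <| .inr <| .inl ⟨hL, update_self _ _ _⟩⟩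

lemma pmpTrans_update_one_of_notMem (hJ : j₀ ∉ J) (hL : xh j₀ = .zero)
    (hw : ∃ w ∈ mpGamma xh, f w j₀ = true) : pmpTrans J f xh (update xh j₀ .one) :=
  ⟨j₀, fun _ hj => update_of_ne hj _ _,
    .inr <| .inr <| .inr <| .inr <| .inl ⟨hJ, hL, hw, update_self _ _ _⟩⟩

lemma pmpTrans_update_zero_of_notMem (hJ : j₀ ∉ J) (hL : xh j₀ = .one)
    (hw : ∃ w ∈ mpGamma xh, f w j₀ = false) : pmpTrans J f xh (update xh j₀ .zero) :=
  ⟨j₀, fun _ hj => update_of_ne hj _ _,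
    .inr <| .inr <| .inr <| .inr <| .inr ⟨hJ, hL, hw, update_self _ _ _⟩⟩

lemma reflTransGen_update_one (hL : xh j₀ = .zero ∨ xh j₀ = .dec)
    (hw : ∃ w ∈ mpGamma xh, f w j₀ = true) :
    ReflTransGen (pmpTrans J f) xh (update xh j₀ .one) := by
  have hinc : pmpTrans J f (update xh j₀ .inc) (update (update xh j₀ .inc) j₀ .one) :=
    pmpTrans_update_one_of_inc (update_self _ _ _)
  rw [update_idem] at hinc
  exact .head (pmpTrans_update_inc hL hw) (.single hinc)

lemma reflTransGen_update_zero (hL : xh j₀ = .one ∨ xh j₀ = .inc)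
    (hw : ∃ w ∈ mpGamma xh, f w j₀ = false) :
    ReflTransGen (pmpTrans J f) xh (update xh j₀ .zero) := by
  have hdec : pmpTrans J f (update xh j₀ .dec) (update (update xh j₀ .dec) j₀ .zero) :=
    pmpTrans_update_zero_of_dec (update_self _ _ _)
  rw [update_idem] at hdec
  exact .head (pmpTrans_update_dec hL hw) (.single hdec)

end Moves

section Steps

variable {n : ℕ} {J : Set (Fin n)} {f : (Fin n → Bool) → Fin n → Bool} {m x y : Fin n → ℕ}
  {xh : Fin n → MPLevel} {j₀ : Fin n}

lemma exists_pmp_path_of_succ (hc : mpCompat m x xh) (hfix : ∀ j, j ≠ j₀ → y j = x j)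
    (hy : y j₀ = x j₀ + 1) (hym : y j₀ ≤ m j₀) (hJ : j₀ ∈ J → 1 < m j₀)
    (hw : ∃ w ∈ mpGamma xh, f w j₀ = true) :
    ∃ yh, mpCompat m y yh ∧ ReflTransGen (pmpTrans J f) xh yh := by
  have hx : x j₀ ≤ m j₀ := by omega
  cases hL : xh j₀
  case zero =>
    have hx0 := hc.eq_zero hx hL
    by_cases htop : y j₀ = m j₀
    · have hnJ : j₀ ∉ J := fun hj => by have := hJ hj; omega
      exact ⟨_, mpCompat_update_one hc hfix htop (by omega),
        .single (pmpTrans_update_one_of_notMem hnJ hL hw)⟩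
    · exact ⟨_, mpCompat_update_of_lt hc hfix (by omega) (by omega) (.inl rfl),
        .single (pmpTrans_update_inc (.inl hL) hw)⟩
  case one => exact absurd (hc.eq_of_eq_one hx hL) (by omega)
  case inc =>
    by_cases htop : y j₀ = m j₀
    · exact ⟨_, mpCompat_update_one hc hfix htop (by omega),
        .single (pmpTrans_update_one_of_inc hL)⟩
    · refine ⟨_, mpCompat_update_of_lt hc hfix (by omega) (by omega) (.inl hL), ?_⟩
      rw [update_eq_self]
  case dec =>
    by_cases htop : y j₀ = m j₀
    · exact ⟨_, mpCompat_update_one hc hfix htop (by omega),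
        reflTransGen_update_one (.inr hL) hw⟩
    · exact ⟨_, mpCompat_update_of_lt hc hfix (by omega) (by omega) (.inl rfl),
        .single (pmpTrans_update_inc (.inr hL) hw)⟩

lemma exists_pmp_path_of_pred (hc : mpCompat m x xh) (hfix : ∀ j, j ≠ j₀ → y j = x j)
    (hy : y j₀ + 1 = x j₀) (hx : x j₀ ≤ m j₀) (hJ : j₀ ∈ J → 1 < m j₀)
    (hw : ∃ w ∈ mpGamma xh, f w j₀ = false) :
    ∃ yh, mpCompat m y yh ∧ ReflTransGen (pmpTrans J f) xh yh := by
  cases hL : xh j₀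
  case zero => exact absurd (hc.eq_zero hx hL) (by omega)
  case one =>
    have hxm := hc.eq_of_eq_one hx hL
    by_cases hbot : y j₀ = 0
    · have hnJ : j₀ ∉ J := fun hj => by have := hJ hj; omega
      exact ⟨_, mpCompat_update_zero hc hfix hbot (by omega),
        .single (pmpTrans_update_zero_of_notMem hnJ hL hw)⟩
    · exact ⟨_, mpCompat_update_of_lt hc hfix (by omega) (by omega) (.inr rfl),
        .single (pmpTrans_update_dec (.inl hL) hw)⟩
  case inc =>
    by_cases hbot : y j₀ = 0
    · exact ⟨_, mpCompat_update_zero hc hfix hbot (by omega),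
        reflTransGen_update_zero (.inr hL) hw⟩
    · exact ⟨_, mpCompat_update_of_lt hc hfix (by omega) (by omega) (.inr rfl),
        .single (pmpTrans_update_dec (.inr hL) hw)⟩
  case dec =>
    by_cases hbot : y j₀ = 0
    · exact ⟨_, mpCompat_update_zero hc hfix hbot (by omega),
        .single (pmpTrans_update_zero_of_dec hL)⟩
    · refine ⟨_, mpCompat_update_of_lt hc hfix (by omega) (by omega) (.inr hL), ?_⟩
      rw [update_eq_self]

end Steps

section Async

variable {n : ℕ} {m x y : Fin n → ℕ} {h : (Fin n → ℕ) → Fin n → ℕ}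

lemma le_of_asyncTrans (hmv : isMVModel m h) (hx : ∀ j, x j ≤ m j) (hxy : asyncTrans h x y) :
    ∀ j, y j ≤ m j := by
  obtain ⟨j₀, -, hfix, hdir⟩ := hxy
  intro j
  rcases eq_or_ne j j₀ with rfl | hj
  · have := (hmv x hx j).1
    have := hx j
    omega
  · exact hfix j hj ▸ hx j

lemma le_of_reflTransGen_asyncTrans (hmv : isMVModel m h) (hx : ∀ j, x j ≤ m j)
    (hxy : ReflTransGen (asyncTrans h) x y) : ∀ j, y j ≤ m j := by
  induction hxy with
  | refl => exact hx
  | tail _ hstep ih => exact le_of_asyncTrans hmv ih hstep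

lemma exists_pmp_path_of_asyncTrans {J : Set (Fin n)} {f : (Fin n → Bool) → Fin n → Bool}
    {xh : Fin n → MPLevel} (hJ : ∀ j ∈ J, 1 < m j) (hmv : isMVModel m h)
    (href : isRefinement m f h) (hx : ∀ j, x j ≤ m j) (hxy : asyncTrans h x y)
    (hc : mpCompat m x xh) :
    ∃ yh, mpCompat m y yh ∧ ReflTransGen (pmpTrans J f) xh yh := by
  obtain ⟨j₀, -, hfix, hdir⟩ := hxy
  have hhm := (hmv x hx j₀).1
  have hαγ := mvAlpha_subset_mpGamma hc hx
  rcases hdir with ⟨hlt, hy⟩ | ⟨hlt, hy⟩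
  · obtain ⟨w, hwα, hfw, -⟩ := (href x hx j₀).2 hlt
    exact exists_pmp_path_of_succ hc hfix hy (by omega) (hJ j₀) ⟨w, hαγ hwα, hfw⟩
  · obtain ⟨w, hwα, hfw, -⟩ := (href x hx j₀).1 hlt
    exact exists_pmp_path_of_pred hc hfix (by omega) (hx j₀) (hJ j₀) ⟨w, hαγ hwα, hfw⟩

end Async

theorem pmp_completeness_general {n : ℕ} (f : (Fin n → Bool) → Fin n → Bool)
    (J : Set (Fin n)) (m : Fin n → ℕ)
    (hJ : ∀ j, 1 < m j ↔ j ∈ J)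
    (h : (Fin n → ℕ) → Fin n → ℕ) (hmv : isMVModel m h) (href : isRefinement m f h)
    (x y : Fin n → ℕ) (hx : ∀ j, x j ≤ m j)
    (ht : Relation.ReflTransGen (asyncTrans h) x y)
    (xh : Fin n → MPLevel) (hc : mpCompat m x xh) :
    ∃ yh : Fin n → MPLevel, mpCompat m y yh ∧
      Relation.ReflTransGen (pmpTrans J f) xh yh := by
  induction ht with
  | refl => exact ⟨xh, hc, .refl⟩
  | tail hxz hzy ih =>
    obtain ⟨zh, hcz, hpath⟩ := ih
    obtain ⟨yh, hcy, hpath'⟩ := exists_pmp_path_of_asyncTrans (fun j => (hJ j).2) hmv href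
      (le_of_reflTransGen_asyncTrans hmv hx hxz) hzy hcz
    exact ⟨yh, hcy, hpath.trans hpath'⟩

/-- completeness of the partial m.p. scheme: let h be a refinement of f on
X = ∏ {0,…,m_j} with m_j > 1 iff j ∈ J. If there is an asynchronous trajectory from x to y
in the dynamics of h, then from any J-m.p. state x̂ compatible with x there is a trajectory
in the partial J-m.p. dynamics of f to some state ŷ compatible with y. -/
theorem pmp_completeness {n : ℕ} (f : (Fin n → Bool) → Fin n → Bool)
    (J : Set (Fin n)) (m : Fin n → ℕ) (hm : ∀ j, 1 ≤ m j)
    (hJ : ∀ j, 1 < m j ↔ j ∈ J)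
    (h : (Fin n → ℕ) → Fin n → ℕ) (hmv : isMVModel m h) (href : isRefinement m f h)
    (x y : Fin n → ℕ) (hx : ∀ j, x j ≤ m j)
    (ht : Relation.ReflTransGen (asyncTrans h) x y)
    (xh : Fin n → MPLevel) (hXJ : inXJ J xh) (hc : mpCompat m x xh) :
    ∃ yh : Fin n → MPLevel, mpCompat m y yh ∧
      Relation.ReflTransGen (pmpTrans J f) xh yh :=
  pmp_completeness_general f J m hJ h hmv href x y hx ht xh hc
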